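/- Let f : H₀ → H₁ and g : H₁ → H₂ be closed densely defined Γ-equivariant operators between Hilbert N(Γ)-modules with f(Dom(f)) ⊂ Dom(g). If the closure of g∘f is Γ-Fredholm and g is bounded, then f is Γ-Fredholm. -/

import Mathlib

/-!
If `‖f x‖ ≤ δ ‖x‖` then `‖g (f x)‖ ≤ ‖g‖ δ ‖x‖`, and the closure of `g ∘ f` extends `g ∘ f`.
Hence with `δ = ε / (‖g‖ + 1)` every closed invariant submodule on which `f` is `δ`-small is one
on which the closure of `g ∘ f` is `ε`-small, and the dimension bound for the latter applies.
-/

noncomputable section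

open scoped ENNReal

/-- Reindexing `ℓ²` along an equivalence of index sets (as a function). -/
def lpReindexAux {ι κ : Type*} (e : ι ≃ κ) (x : lp (fun _ : ι => ℂ) 2) :
    lp (fun _ : κ => ℂ) 2 :=
  ⟨fun k => x (e.symm k), by
    apply memℓp_gen
    exact (Equiv.summable_iff e.symm).2 ((memℓp_gen_iff (by norm_num)).1 (lp.memℓp x))⟩

/-- Reindexing `ℓ²` along an equivalence of index sets, as a linear isometry. -/
def lpReindex {ι κ : Type*} (e : ι ≃ κ) :
    lp (fun _ : ι => ℂ) 2 →ₗᵢ[ℂ] lp (fun _ : κ => ℂ) 2 where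
  toLinearMap :=
  { toFun := lpReindexAux e
    map_add' := by
      intro x y
      apply lp.ext
      funext k
      simp [lpReindexAux, lp.coeFn_add, Pi.add_apply]
      rfl
    map_smul' := by
      intro c x
      apply lp.ext
      funext k
      simp [lpReindexAux, lp.coeFn_smul, Pi.smul_apply] }
  norm_map' := by
    intro x
    have h2 : (0:ℝ) < (2 : ℝ≥0∞).toReal := by norm_num
    have key : ‖lpReindexAux e x‖ ^ (2 : ℝ≥0∞).toReal = ‖x‖ ^ (2 : ℝ≥0∞).toReal := by
      rw [lp.norm_rpow_eq_tsum h2, lp.norm_rpow_eq_tsum h2]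
      exact e.symm.tsum_eq (fun i => ‖x i‖ ^ (2 : ℝ≥0∞).toReal)
    exact Real.rpow_left_injOn (by norm_num)
      (Set.mem_setOf_eq ▸ norm_nonneg _) (Set.mem_setOf_eq ▸ norm_nonneg _) key

variable (Γ : Type*) [Group Γ]

/-- The Hilbert space `ℓ²(Γ) ⊗̂ ℓ²(ℕ) = ℓ²(Γ × ℕ)`, the universal ambient
Hilbert `N(Γ)`-module in which our Hilbert `N(Γ)`-modules are realized as
closed `Γ`-invariant subspaces. -/
abbrev GHilb := lp (fun _ : Γ × ℕ => ℂ) 2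

variable {Γ}

/-- The left regular representation of `Γ` on `ℓ²(Γ × ℕ)` (acting on the first
factor): `(γ · x)(g, i) = x (γ⁻¹ g, i)`.  This is the module structure. -/
def Ltrans (γ : Γ) : GHilb Γ →L[ℂ] GHilb Γ :=
  (lpReindex ((Equiv.mulLeft γ).prodCongr (Equiv.refl ℕ))).toContinuousLinearMap

/-- The right regular representation of `Γ` on `ℓ²(Γ × ℕ)`. -/
def Rtrans (γ : Γ) : GHilb Γ →L[ℂ] GHilb Γ :=
  (lpReindex ((Equiv.mulRight γ).prodCongr (Equiv.refl ℕ))).toContinuousLinearMap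

/-- The shuffle of the `ℓ²(ℕ)`-factor of `ℓ²(Γ × ℕ)` along a permutation of `ℕ`. -/
def Sshuffle (σ : ℕ ≃ ℕ) : GHilb Γ →L[ℂ] GHilb Γ :=
  (lpReindex ((Equiv.refl Γ).prodCongr σ)).toContinuousLinearMap

/-- The `i`-th column subspace `ℓ²(Γ × {i})` of `ℓ²(Γ × ℕ)`. -/
def colSpace (Γ : Type*) [Group Γ] (i : ℕ) : Submodule ℂ (GHilb Γ) where
  carrier := {x | ∀ a : Γ × ℕ, a.2 ≠ i → x a = 0}
  zero_mem' := by intro a _; simp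
  add_mem' := by
    intro x y hx hy a ha
    simp only [lp.coeFn_add, Pi.add_apply, hx a ha, hy a ha, add_zero]
  smul_mem' := by
    intro c x hx a ha
    simp only [lp.coeFn_smul, Pi.smul_apply, hx a ha, smul_zero]

/-- Evaluation at an index, as a continuous linear functional on `ℓ²`. -/
def evalCLM (a : Γ × ℕ) : GHilb Γ →L[ℂ] ℂ :=
  LinearMap.mkContinuous
    { toFun := fun x => x a
      map_add' := by intro x y; simp [lp.coeFn_add, Pi.add_apply]
      map_smul' := by intro c x; simp [lp.coeFn_smul, Pi.smul_apply] }
    1 (by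
      intro x
      rw [one_mul]
      exact lp.norm_apply_le_norm (by norm_num) x a)

theorem colSpace_isClosed (i : ℕ) : IsClosed ((colSpace Γ i : Submodule ℂ (GHilb Γ)) : Set (GHilb Γ)) := by
  have : ((colSpace Γ i : Submodule ℂ (GHilb Γ)) : Set (GHilb Γ)) =
      ⋂ (a : {a : Γ × ℕ // a.2 ≠ i}), (evalCLM a.1) ⁻¹' {0} := by
    ext x
    simp only [Set.mem_iInter, Set.mem_preimage, Set.mem_singleton_iff, Subtype.forall]
    rfl
  rw [this]
  exact isClosed_iInter fun a => (IsClosed.preimage (evalCLM a.1).continuous isClosed_singleton)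

/-- The orthogonal projection onto the `i`-th column of `ℓ²(Γ × ℕ)`. -/
def colProj (i : ℕ) : GHilb Γ →L[ℂ] GHilb Γ :=
  haveI : CompleteSpace (colSpace Γ i) := (colSpace_isClosed i).completeSpace_coe
  (colSpace Γ i).subtypeL.comp (Submodule.orthogonalProjectionOnto (colSpace Γ i))

/-- An element of the group von Neumann algebra `N(Γ)` acting on the module
`ℓ²(Γ × ℕ) = ℓ²(Γ) ⊗̂ ℓ²(ℕ)`: a bounded operator lying in `N(Γ) ⊗ 1`, i.e.
commuting with the right translations, the shuffles of the `ℓ²(ℕ)` factor and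
the column projections (whose commutant is exactly `N(Γ) ⊗ 1`). -/
def InNGamma (r : GHilb Γ →L[ℂ] GHilb Γ) : Prop :=
  (∀ (γ : Γ) (x : GHilb Γ), r (Rtrans γ x) = Rtrans γ (r x)) ∧
  (∀ (σ : ℕ ≃ ℕ) (x : GHilb Γ), r (Sshuffle σ x) = Sshuffle σ (r x)) ∧
  (∀ (i : ℕ) (x : GHilb Γ), r (colProj i x) = colProj i (r x))

/-- A `Γ`-invariant submodule of `ℓ²(Γ × ℕ)`. -/
def InvariantSub (V : Submodule ℂ (GHilb Γ)) : Prop :=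
  ∀ (γ : Γ) (x : GHilb Γ), x ∈ V → Ltrans γ x ∈ V

/-- `Γ`-equivariance of a (possibly unbounded) operator on `ℓ²(Γ × ℕ)`. -/
def EquivariantP (f : GHilb Γ →ₗ.[ℂ] GHilb Γ) : Prop :=
  ∀ (γ : Γ) (x : GHilb Γ) (hx : x ∈ f.domain),
    ∃ h : Ltrans γ x ∈ f.domain, f ⟨Ltrans γ x, h⟩ = Ltrans γ (f ⟨x, hx⟩)

/-- The von Neumann dimension of a (closed) submodule of `ℓ²(Γ × ℕ)`:
the trace `Σᵢ ⟪P δ_{(1,i)}, δ_{(1,i)}⟫` of the orthogonal projection onto it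
(junk value `0` if the submodule is not closed). -/
def vNdim (V : Submodule ℂ (GHilb Γ)) : ℝ≥0∞ :=
  letI := Classical.dec (IsClosed (V : Set (GHilb Γ)))
  if h : IsClosed (V : Set (GHilb Γ)) then
    haveI : CompleteSpace V := h.completeSpace_coe
    letI := Classical.decEq (Γ × ℕ)
    ∑' i : ℕ, ENNReal.ofReal
      (@inner ℂ _ _ ((Submodule.orthogonalProjectionOnto V (lp.single 2 ((1 : Γ), i) (1 : ℂ)) : GHilb Γ))
        (lp.single 2 ((1 : Γ), i) (1 : ℂ))).re
  else 0

/-- A closed densely defined `Γ`-equivariant operator `f` is `Γ`-Fredholm if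
there are `ε > 0` and `C < ∞` such that every closed `Γ`-invariant submodule
`L` contained in `{x ∈ Dom f : ‖f x‖ ≤ ε ‖x‖}` has `dim_{N(Γ)} L < C`. -/
def GammaFredholm (f : GHilb Γ →ₗ.[ℂ] GHilb Γ) : Prop :=
  ∃ ε : ℝ, 0 < ε ∧ ∃ C : ℝ≥0∞, C ≠ ⊤ ∧
    ∀ L : Submodule ℂ (GHilb Γ), IsClosed (L : Set (GHilb Γ)) → InvariantSub L →
      ((L : Set (GHilb Γ)) ⊆ {x | ∃ hx : x ∈ f.domain, ‖f ⟨x, hx⟩‖ ≤ ε * ‖x‖}) →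
      vNdim L < C

/-- A `Γ`-invariant subspace `S` is essentially dense in the closed module `W`
if for every `ε > 0` there is a closed `Γ`-invariant submodule `M ⊆ S` with
`dim_{N(Γ)} (W ⊓ Mᗮ) < ε`. -/
def EssentiallyDenseIn (S : Set (GHilb Γ)) (W : Submodule ℂ (GHilb Γ)) : Prop :=
  ∀ ε : ℝ≥0∞, 0 < ε →
    ∃ M : Submodule ℂ (GHilb Γ), IsClosed (M : Set (GHilb Γ)) ∧ InvariantSub M ∧
      (M : Set (GHilb Γ)) ⊆ S ∧ vNdim (W ⊓ Mᗮ) < ε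

namespace LinearPMap

section Seminormed

variable {R E F : Type*} [Ring R] [SeminormedAddCommGroup E] [Module R E]
  [SeminormedAddCommGroup F] [Module R F]

def approxKernel (f : E →ₗ.[R] F) (ε : ℝ) : Set E :=
  {x | ∃ hx : x ∈ f.domain, ‖f ⟨x, hx⟩‖ ≤ ε * ‖x‖}

theorem approxKernel_subset_of_le {f h : E →ₗ.[R] F} (hfh : f ≤ h) (ε : ℝ) :
    f.approxKernel ε ⊆ h.approxKernel ε := fun x ⟨hx, hle⟩ =>
  ⟨hfh.1 hx, by rwa [← hfh.2 (x := ⟨x, hx⟩) (y := ⟨x, hfh.1 hx⟩) rfl]⟩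

end Seminormed

theorem approxKernel_subset_compPMap {𝕜 E F G : Type*} [NontriviallyNormedField 𝕜]
    [SeminormedAddCommGroup E] [NormedSpace 𝕜 E] [SeminormedAddCommGroup F] [NormedSpace 𝕜 F]
    [SeminormedAddCommGroup G] [NormedSpace 𝕜 G] (g : F →L[𝕜] G) (f : E →ₗ.[𝕜] F) {δ ε : ℝ}
    (hδε : ‖g‖ * δ ≤ ε) :
    f.approxKernel δ ⊆ ((g : F →ₗ[𝕜] G).compPMap f).approxKernel ε := fun x ⟨hx, hle⟩ =>
  ⟨hx, calc ‖g (f ⟨x, hx⟩)‖ ≤ ‖g‖ * ‖f ⟨x, hx⟩‖ := g.le_opNorm _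
    _ ≤ ‖g‖ * (δ * ‖x‖) := by gcongr
    _ ≤ ε * ‖x‖ := by rw [← mul_assoc]; gcongr⟩

end LinearPMap

theorem GammaFredholm.of_approxKernel_subset {f h : GHilb Γ →ₗ.[ℂ] GHilb Γ}
    (hh : GammaFredholm h) (hfh : ∀ ε > 0, ∃ δ > 0, f.approxKernel δ ⊆ h.approxKernel ε) :
    GammaFredholm f := by
  obtain ⟨ε, hε, C, hC, hbound⟩ := hh
  obtain ⟨δ, hδ, hsub⟩ := hfh ε hε
  exact ⟨δ, hδ, C, hC, fun L hL hLinv hLf => hbound L hL hLinv (hLf.trans hsub)⟩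

theorem gammaFredholm_of_comp_bounded
    {Γ : Type*} [Group Γ]
    (f : GHilb Γ →ₗ.[ℂ] GHilb Γ)
    (g : GHilb Γ →L[ℂ] GHilb Γ)
    -- the composite `g ∘ f`, with domain `Dom f`
    (gf : GHilb Γ →ₗ.[ℂ] GHilb Γ)
    (hgf : gf = ⟨f.domain, (g : GHilb Γ →ₗ[ℂ] GHilb Γ).comp f.toFun⟩)
    (hcompfred : GammaFredholm gf.closure) :
    GammaFredholm f := by
  refine hcompfred.of_approxKernel_subset fun ε hε => ⟨ε / (‖g‖ + 1), by positivity, ?_⟩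
  have hδε : ‖g‖ * (ε / (‖g‖ + 1)) ≤ ε := by
    rw [mul_div_assoc', div_le_iff₀ (by positivity)]
    nlinarith [norm_nonneg g]
  subst hgf
  exact (LinearPMap.approxKernel_subset_compPMap g f hδε).trans
    (LinearPMap.approxKernel_subset_of_le (LinearPMap.le_closure _) ε)
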